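/- Let 0 < α < 1, set β := 1/(1−α), and let q > 0. There exists a constant C = C(q, a, d, α), independent of Λ and x, such that for every finite set Λ ⊂ 𝒦 × ℕ₀^d and every x ∈ ℝ^d: ∑_{(R,n)∈Λ} |R|^{q − ν(1−α)/α} · 𝟙_{U(R,n)}(x) ≤ C · I_Λ(x)^q, where I_Λ(x) := max{ |R| · 𝟙_{U(R,n)}(x) : (R,n) ∈ Λ } (with the maximum over the empty set taken to be 0). -/

import Mathlib

/-!
Only pairs with `x ∈ U(R, n)` contribute, and for a fixed rectangle `R` at most one `n` does, so
the sum runs over distinct rectangles `R ∈ 𝒦` with `|R| ≤ S := I_Λ(x)`. Put `ν = ∑ aᵢ`,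
`κ = ν (β - 1)` and `γ = ν (1 - α) / α`, so that `γ (β - 1) = ν ≥ 1`. A rectangle of `𝒦_j` has
volume at least `2^{-d} j^κ`, and the rectangles of `𝒦_j` together have volume at most
`|A_j ∖ B_j| ≲ j^{νβ - 1}`. Hence only levels `j ≤ (2^d S)^{1/κ}` occur, and for a small `ε > 0`
the bound `|R|^{q-γ} ≤ S^{q-ε} (2^{-d} j^κ)^{ε-γ-1} |R|` shows that level `j` contributes
`≲ S^{q-ε} j^{κε - 1}`. Summing over `j ≤ (2^d S)^{1/κ}` gives `≲ S^{q-ε} S^ε = S^q`.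
-/

open MeasureTheory

noncomputable section

/-- Number of outer intervals on each side at level `j`: `⌈j^{a-1}⌉`. -/
def mOut (a : ℝ) (j : ℕ) : ℤ := ⌈(j : ℝ) ^ (a - 1)⌉

/-- Number of inner intervals at level `j`: `⌈j^{a}⌉`. -/
def mIn (a : ℝ) (j : ℕ) : ℤ := ⌈(j : ℝ) ^ a⌉

/-- Total number of intervals in the partition `𝒜_j^i`. -/
def numIv (a : ℝ) (j : ℕ) : ℤ := mIn a j + 2 * mOut a j

/-- Common length of the outer intervals. -/
def lenO (a β : ℝ) (j : ℕ) : ℝ :=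
  (((j : ℝ) + 1) ^ (a * β) - (j : ℝ) ^ (a * β)) / ((mOut a j : ℤ) : ℝ)

/-- Common length of the inner intervals. -/
def lenI (a β : ℝ) (j : ℕ) : ℝ :=
  2 * (j : ℝ) ^ (a * β) / ((mIn a j : ℤ) : ℝ)

/-- The `k`-th knot (from the left, `k = 0, …, numIv`) of the partition `𝒜_j^i` of
`A_j^i = [−(j+1)^{aβ}, (j+1)^{aβ})`: the two components of `A_j^i ∖ B_j^i` are divided
into `⌈j^{a-1}⌉` equal intervals each, and `B_j^i = [−j^{aβ}, j^{aβ})` into `⌈j^{a}⌉`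
equal intervals. -/
def knot (a β : ℝ) (j : ℕ) (k : ℤ) : ℝ :=
  if k ≤ mOut a j then -((j : ℝ) + 1) ^ (a * β) + (k : ℝ) * lenO a β j
  else if k ≤ mOut a j + mIn a j then
    -(j : ℝ) ^ (a * β) + ((k - mOut a j : ℤ) : ℝ) * lenI a β j
  else (j : ℝ) ^ (a * β) + ((k - mOut a j - mIn a j : ℤ) : ℝ) * lenO a β j

/-- The `k`-th interval of the partition `𝒜_j^i`. -/
def ivl (a β : ℝ) (j : ℕ) (k : ℤ) : Set ℝ :=
  Set.Ico (knot a β j k) (knot a β j (k + 1))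

/-- The partition `𝒜_j^i` (with `a = a_i`), as a family of subsets of `ℝ`. -/
def partA (a β : ℝ) (j : ℕ) : Set (Set ℝ) :=
  {I | ∃ k : ℤ, 0 ≤ k ∧ k < numIv a j ∧ I = ivl a β j k}

/-- The index `k` corresponds to an inner interval. -/
def isInnerIdx (a : ℝ) (j : ℕ) (k : ℤ) : Prop :=
  mOut a j ≤ k ∧ k < mOut a j + mIn a j

/-- The family `ℬ_j^i` of inner intervals. -/
def partInner (a β : ℝ) (j : ℕ) : Set (Set ℝ) :=
  {I | ∃ k : ℤ, isInnerIdx a j k ∧ I = ivl a β j k}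

/-- `𝒜_j`: rectangles `I_1 × ⋯ × I_d` with `I_i ∈ 𝒜_j^i`, encoded by their factors. -/
def rectA {d : ℕ} (a : Fin d → ℝ) (β : ℝ) (j : ℕ) : Set (Fin d → Set ℝ) :=
  {R | ∀ i, R i ∈ partA (a i) β j}

/-- `ℬ_j`: rectangles all of whose factors are inner intervals. -/
def rectB {d : ℕ} (a : Fin d → ℝ) (β : ℝ) (j : ℕ) : Set (Fin d → Set ℝ) :=
  {R | ∀ i, R i ∈ partInner (a i) β j}

/-- `𝒦_j := 𝒜_j ∖ ℬ_j` for `j ≥ 1`. -/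
def rectK {d : ℕ} (a : Fin d → ℝ) (β : ℝ) (j : ℕ) : Set (Fin d → Set ℝ) :=
  rectA a β j \ rectB a β j

/-- `𝒦_0 := {[−1,1)^d}`. -/
def rectK0 (d : ℕ) : Set (Fin d → Set ℝ) := {fun _ => Set.Ico (-1 : ℝ) 1}

/-- `𝒦 := ⋃_{j ≥ 0} 𝒦_j`. -/
def rectKall {d : ℕ} (a : Fin d → ℝ) (β : ℝ) : Set (Fin d → Set ℝ) :=
  rectK0 d ∪ ⋃ (j : ℕ) (_ : 1 ≤ j), rectK a β j

/-- The volume `|R|` of a rectangle, the product of its side lengths. -/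
def rVol {d : ℕ} (R : Fin d → Set ℝ) : ℝ := ∏ i, (volume (R i)).toReal

/-- The Euclidean norm on `ℝ^d`. -/
def euclNorm {d : ℕ} (x : Fin d → ℝ) : ℝ := Real.sqrt (∑ i, (x i) ^ 2)

/-- The anisotropic dilation `t^{-a} x`. -/
def aDilNeg {d : ℕ} (a : Fin d → ℝ) (t : ℝ) (x : Fin d → ℝ) : Fin d → ℝ :=
  fun i => t ^ (-(a i)) * x i

/-- `nrm` is the anisotropic quasi-norm `|·|_a`. -/
def IsAnisoNorm {d : ℕ} (a : Fin d → ℝ) (nrm : (Fin d → ℝ) → ℝ) : Prop :=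
  nrm 0 = 0 ∧ ∀ x : Fin d → ℝ, x ≠ 0 → 0 < nrm x ∧ euclNorm (aDilNeg a (nrm x) x) = 1

/-- `U(R,n) = { y : |δ_R y − π(n + (1/2,…,1/2))|_a < 1 }`, where
`δ_R = diag(|I_1|, …, |I_d|)` for `R = I_1 × ⋯ × I_d`. -/
def Uset {d : ℕ} (nrm : (Fin d → ℝ) → ℝ) (R : Fin d → Set ℝ) (n : Fin d → ℕ) :
    Set (Fin d → ℝ) :=
  {y | nrm (fun i => (volume (R i)).toReal * y i - Real.pi * ((n i : ℝ) + 1 / 2)) < 1}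

open Finset

lemma Int.sum_Ico_sub {M : Type*} [AddCommGroup M] (f : ℤ → M) {m n : ℤ} (h : m ≤ n) :
    ∑ k ∈ Ico m n, (f (k + 1) - f k) = f n - f m := by
  induction n, h using Int.leInduction with
  | base => simp
  | succ n hmn ih =>
    rw [Ico_add_one_right_eq_Icc, sum_Icc_eq_sum_Ico_add _ hmn, ih]
    abel

lemma Finset.sum_le_sum_sum_filter_of_cover {ι α M : Type*} [AddCommMonoid M] [Preorder M]
    [AddLeftMono M] {s : Finset α} {t : Finset ι} {P : ι → α → Prop}
    [∀ i, DecidablePred (P i)] {f : α → M} (hf : ∀ x ∈ s, 0 ≤ f x)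
    (hcover : ∀ x ∈ s, ∃ i ∈ t, P i x) :
    ∑ x ∈ s, f x ≤ ∑ i ∈ t, ∑ x ∈ s with P i x, f x := by
  simp_rw [sum_filter]
  rw [sum_comm]
  refine sum_le_sum fun x hx => ?_
  obtain ⟨i, hi, hPi⟩ := hcover x hx
  calc f x = if P i x then f x else 0 := (if_pos hPi).symm
    _ ≤ ∑ i ∈ t, if P i x then f x else 0 :=
        single_le_sum (f := fun i => if P i x then f x else 0)
          (fun i _ => by split_ifs; exacts [hf x hx, le_rfl]) hi

lemma Finset.le_ciSup₂_of_mem {ι α : Type*} [ConditionallyCompleteLattice α] {s : Finset ι}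
    (f : ι → α) {i : ι} (hi : i ∈ s) :
    f i ≤ ⨆ j ∈ s, f j :=
  le_ciSup₂ (f := fun j (_ : j ∈ s) => f j)
    ((s.finite_toSet.image f).subset (Set.iUnion_subset fun j =>
      Set.range_subset_iff.mpr fun hj => ⟨j, hj, rfl⟩)).bddAbove i hi

section Calculus

lemma rpow_sub_one_le_add_one_rpow_sub_rpow {t s : ℝ} (ht : 0 < t) (hs : 1 ≤ s) :
    t ^ (s - 1) ≤ (t + 1) ^ s - t ^ s := by
  have h₁ : (t + 1) ^ s = (t + 1) ^ (s - 1) * (t + 1) := by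
    rw [← Real.rpow_add_one (by positivity), sub_add_cancel]
  have h₂ : t ^ s = t ^ (s - 1) * t := by rw [← Real.rpow_add_one ht.ne', sub_add_cancel]
  have h₃ : t ^ (s - 1) ≤ (t + 1) ^ (s - 1) :=
    Real.rpow_le_rpow ht.le (by linarith) (by linarith)
  rw [h₁, h₂]
  nlinarith

lemma rpow_eq_one_sub_inv_rpow_mul {t s : ℝ} (ht : 0 ≤ t) :
    t ^ s = (1 + -(t + 1)⁻¹) ^ s * (t + 1) ^ s := by
  rw [← Real.mul_rpow (by simp [inv_le_one_of_one_le₀ (by linarith : (1 : ℝ) ≤ t + 1)])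
    (by positivity)]
  congr 1
  field_simp
  ring

lemma add_one_rpow_sub_rpow_le {t s : ℝ} (ht : 1 ≤ t) (hs : 1 ≤ s) :
    (t + 1) ^ s - t ^ s ≤ s * 2 ^ (s - 1) * t ^ (s - 1) := by
  have hu : 0 < t + 1 := by linarith
  have hbern := one_add_mul_self_le_rpow_one_add
    (neg_le_neg (inv_le_one_of_one_le₀ (by linarith : (1 : ℝ) ≤ t + 1))) hs
  have htangent : (t + 1) ^ s - t ^ s ≤ s * (t + 1) ^ (s - 1) := by
    rw [rpow_eq_one_sub_inv_rpow_mul (by linarith : (0 : ℝ) ≤ t), Real.rpow_sub_one hu.ne',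
      div_eq_mul_inv]
    nlinarith [mul_le_mul_of_nonneg_right hbern (Real.rpow_nonneg hu.le s)]
  calc (t + 1) ^ s - t ^ s ≤ s * (t + 1) ^ (s - 1) := htangent
    _ ≤ s * (2 * t) ^ (s - 1) := by gcongr; linarith
    _ = s * 2 ^ (s - 1) * t ^ (s - 1) := by rw [Real.mul_rpow (by norm_num) (by linarith)]; ring

lemma mul_add_one_rpow_le_add_one_rpow_sub_rpow {t s : ℝ} (ht : 0 ≤ t) (hs₀ : 0 ≤ s)
    (hs₁ : s ≤ 1) : s * (t + 1) ^ (s - 1) ≤ (t + 1) ^ s - t ^ s := by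
  have hu : 0 < t + 1 := by linarith
  have hbern := rpow_one_add_le_one_add_mul_self
    (neg_le_neg (inv_le_one_of_one_le₀ (by linarith : (1 : ℝ) ≤ t + 1))) hs₀ hs₁
  rw [rpow_eq_one_sub_inv_rpow_mul ht, Real.rpow_sub_one hu.ne', div_eq_mul_inv]
  nlinarith [mul_le_mul_of_nonneg_right hbern (Real.rpow_nonneg hu.le s)]

lemma sum_Icc_rpow_sub_one_le {s : ℝ} (hs₀ : 0 < s) (hs₁ : s ≤ 1) (N : ℕ) :
    ∑ j ∈ Icc 1 N, (j : ℝ) ^ (s - 1) ≤ (N : ℝ) ^ s / s := by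
  induction N with
  | zero => simp [Real.zero_rpow hs₀.ne']
  | succ n ih =>
    have hstep : ((n : ℝ) + 1) ^ (s - 1) ≤ (((n : ℝ) + 1) ^ s - (n : ℝ) ^ s) / s := by
      rw [le_div_iff₀ hs₀, mul_comm]
      exact mul_add_one_rpow_le_add_one_rpow_sub_rpow (Nat.cast_nonneg n) hs₀.le hs₁
    rw [sum_Icc_succ_top (by omega), Nat.cast_succ]
    calc _ ≤ (n : ℝ) ^ s / s + (((n : ℝ) + 1) ^ s - (n : ℝ) ^ s) / s := add_le_add ih hstep
      _ = _ := by ring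

lemma sum_Icc_floor_rpow_le {X κ ε : ℝ} (hX : 0 ≤ X) (hκ : 0 < κ) (hε : 0 < ε)
    (hκε : κ * ε ≤ 1) : ∑ j ∈ Icc 1 ⌊X ^ κ⁻¹⌋₊, (j : ℝ) ^ (κ * ε - 1) ≤ X ^ ε / (κ * ε) := by
  refine (sum_Icc_rpow_sub_one_le (by positivity) hκε _).trans ?_
  gcongr
  calc (⌊X ^ κ⁻¹⌋₊ : ℝ) ^ (κ * ε) ≤ (X ^ κ⁻¹) ^ (κ * ε) := by
        gcongr
        exact Nat.floor_le (by positivity)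
    _ = X ^ ε := by rw [← Real.rpow_mul hX, inv_mul_cancel_left₀ hκ.ne']

lemma rpow_add_add_one_le {L v S x y : ℝ} (hL : 0 < L) (hLv : L ≤ v) (hvS : v ≤ S)
    (hx : 0 ≤ x) (hy : y ≤ 0) : v ^ (x + y + 1) ≤ S ^ x * L ^ y * v := by
  have hv : 0 < v := hL.trans_le hLv
  rw [Real.rpow_add hv, Real.rpow_add hv, Real.rpow_one]
  exact mul_le_mul_of_nonneg_right (mul_le_mul (Real.rpow_le_rpow hv.le hvS hx)
    (Real.rpow_le_rpow_of_nonpos hL hLv hy) (by positivity)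
    (Real.rpow_nonneg (hv.le.trans hvS) x)) hv.le

end Calculus

section Partition

variable {a β : ℝ} {j : ℕ} {k : ℤ}

lemma mIn_pos (hj : 1 ≤ j) : 0 < mIn a j :=
  Int.ceil_pos.mpr (Real.rpow_pos_of_pos (Nat.cast_pos.mpr hj) a)

lemma mOut_pos (hj : 1 ≤ j) : 0 < mOut a j :=
  Int.ceil_pos.mpr (Real.rpow_pos_of_pos (Nat.cast_pos.mpr hj) _)

lemma mIn_le (ha : 0 ≤ a) (hj : 1 ≤ j) : (mIn a j : ℝ) ≤ 2 * (j : ℝ) ^ a :=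
  Int.ceil_le_two_mul <| by
    linarith [Real.one_le_rpow (Nat.one_le_cast.mpr hj) ha]

lemma mOut_le (ha : 1 ≤ a) (hj : 1 ≤ j) : (mOut a j : ℝ) ≤ 2 * (j : ℝ) ^ (a - 1) :=
  Int.ceil_le_two_mul <| by
    linarith [Real.one_le_rpow (Nat.one_le_cast.mpr hj) (sub_nonneg.mpr ha)]

lemma mOut_mul_lenO (hj : 1 ≤ j) :
    (mOut a j : ℝ) * lenO a β j = ((j : ℝ) + 1) ^ (a * β) - (j : ℝ) ^ (a * β) :=
  mul_div_cancel₀ _ (Int.cast_ne_zero.mpr (mOut_pos hj).ne')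

lemma mIn_mul_lenI (hj : 1 ≤ j) : (mIn a j : ℝ) * lenI a β j = 2 * (j : ℝ) ^ (a * β) :=
  mul_div_cancel₀ _ (Int.cast_ne_zero.mpr (mIn_pos hj).ne')

lemma lenI_pos (hj : 1 ≤ j) : 0 < lenI a β j :=
  div_pos (mul_pos two_pos (Real.rpow_pos_of_pos (Nat.cast_pos.mpr hj) _))
    (Int.cast_pos.mpr (mIn_pos hj))

lemma lenO_pos (haβ : 0 < a * β) (hj : 1 ≤ j) : 0 < lenO a β j :=
  div_pos (sub_pos.mpr (Real.rpow_lt_rpow (Nat.cast_nonneg j) (lt_add_one _) haβ))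
    (Int.cast_pos.mpr (mOut_pos hj))

/-- The length of `ivl a β j k`; the condition is `isInnerIdx a j k`, spelled out to be
decidable. -/
def lenIdx (a β : ℝ) (j : ℕ) (k : ℤ) : ℝ :=
  if mOut a j ≤ k ∧ k < mOut a j + mIn a j then lenI a β j else lenO a β j

lemma lenIdx_pos (haβ : 0 < a * β) (hj : 1 ≤ j) : 0 < lenIdx a β j k := by
  unfold lenIdx
  split_ifs
  exacts [lenI_pos hj, lenO_pos haβ hj]

lemma knot_succ (hj : 1 ≤ j) : knot a β j (k + 1) = knot a β j k + lenIdx a β j k := by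
  have := mIn_pos (a := a) hj
  have hO := mOut_mul_lenO (a := a) (β := β) hj
  have hI := mIn_mul_lenI (a := a) (β := β) hj
  unfold knot lenIdx
  -- only `k = mOut` and `k = mOut + mIn` step from one branch of `knot` to the next
  split_ifs <;> first
    | omega
    | (obtain rfl : k = mOut a j := by omega
       push_cast; linear_combination -hO)
    | (obtain rfl : k = mOut a j + mIn a j := by omega
       push_cast; linear_combination -hI)
    | (push_cast; ring)

lemma sum_Ico_lenIdx (hj : 1 ≤ j) {m n : ℤ} (h : m ≤ n) :
    ∑ k ∈ Ico m n, lenIdx a β j k = knot a β j n - knot a β j m := by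
  simp_rw [← Int.sum_Ico_sub _ h, knot_succ hj, add_sub_cancel_left]

lemma volume_ivl (haβ : 0 < a * β) (hj : 1 ≤ j) :
    (volume (ivl a β j k)).toReal = lenIdx a β j k := by
  rw [ivl, Real.volume_Ico, knot_succ hj, add_sub_cancel_left,
    ENNReal.toReal_ofReal (lenIdx_pos haβ hj).le]

lemma knot_zero (hj : 1 ≤ j) : knot a β j 0 = -((j : ℝ) + 1) ^ (a * β) := by
  simp [knot, (mOut_pos hj).le]

lemma knot_mOut (hj : 1 ≤ j) : knot a β j (mOut a j) = -(j : ℝ) ^ (a * β) := by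
  simp only [knot, le_refl, if_true]
  linarith [mOut_mul_lenO (a := a) (β := β) hj]

lemma knot_mOut_add_mIn (hj : 1 ≤ j) : knot a β j (mOut a j + mIn a j) = (j : ℝ) ^ (a * β) := by
  have := mIn_pos (a := a) hj
  simp only [knot, show ¬ mOut a j + mIn a j ≤ mOut a j by omega, le_refl, if_true, if_false,
    add_sub_cancel_left]
  linarith [mIn_mul_lenI (a := a) (β := β) hj]

lemma knot_numIv (hj : 1 ≤ j) : knot a β j (numIv a j) = ((j : ℝ) + 1) ^ (a * β) := by
  have := mIn_pos (a := a) hj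
  have := mOut_pos (a := a) hj
  simp only [knot, numIv, show ¬ mIn a j + 2 * mOut a j ≤ mOut a j by omega,
    show ¬ mIn a j + 2 * mOut a j ≤ mOut a j + mIn a j by omega, if_false,
    show mIn a j + 2 * mOut a j - mOut a j - mIn a j = mOut a j by ring]
  linarith [mOut_mul_lenO (a := a) (β := β) hj]

lemma sum_lenIdx_all (hj : 1 ≤ j) :
    ∑ k ∈ Ico 0 (numIv a j), lenIdx a β j k = 2 * ((j : ℝ) + 1) ^ (a * β) := by
  have := mIn_pos (a := a) hj
  have := mOut_pos (a := a) hj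
  rw [sum_Ico_lenIdx hj (by unfold numIv; omega), knot_numIv hj, knot_zero hj]
  ring

lemma sum_lenIdx_inner (hj : 1 ≤ j) :
    ∑ k ∈ Ico (mOut a j) (mOut a j + mIn a j), lenIdx a β j k = 2 * (j : ℝ) ^ (a * β) := by
  rw [sum_Ico_lenIdx hj (by linarith [mIn_pos (a := a) hj]), knot_mOut_add_mIn hj, knot_mOut hj]
  ring

lemma lenI_ge (ha : 0 ≤ a) (hj : 1 ≤ j) : (j : ℝ) ^ (a * β - a) ≤ lenI a β j := by
  have hj₀ : (0 : ℝ) < j := Nat.cast_pos.mpr hj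
  calc (j : ℝ) ^ (a * β - a) = 2 * (j : ℝ) ^ (a * β) / (2 * (j : ℝ) ^ a) := by
        rw [Real.rpow_sub hj₀]; field_simp
    _ ≤ lenI a β j :=
        div_le_div_of_nonneg_left (by positivity) (Int.cast_pos.mpr (mIn_pos hj)) (mIn_le ha hj)

lemma lenO_ge (ha : 1 ≤ a) (hβ : 1 ≤ β) (hj : 1 ≤ j) :
    (j : ℝ) ^ (a * β - a) / 2 ≤ lenO a β j := by
  have hj₀ : (0 : ℝ) < j := Nat.cast_pos.mpr hj
  have hD := rpow_sub_one_le_add_one_rpow_sub_rpow hj₀ (one_le_mul_of_one_le_of_one_le ha hβ)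
  calc (j : ℝ) ^ (a * β - a) / 2 = (j : ℝ) ^ (a * β - 1) / (2 * (j : ℝ) ^ (a - 1)) := by
        rw [show a * β - a = (a * β - 1) - (a - 1) by ring, Real.rpow_sub hj₀]; ring
    _ ≤ lenO a β j :=
        div_le_div₀ ((Real.rpow_nonneg hj₀.le _).trans hD) hD (Int.cast_pos.mpr (mOut_pos hj))
          (mOut_le ha hj)

lemma lenIdx_ge (ha : 1 ≤ a) (hβ : 1 ≤ β) (hj : 1 ≤ j) :
    (j : ℝ) ^ (a * β - a) / 2 ≤ lenIdx a β j k := by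
  unfold lenIdx
  split_ifs
  · linarith [lenI_ge (β := β) (zero_le_one.trans ha) hj,
      Real.rpow_nonneg (Nat.cast_nonneg j) (a * β - a)]
  · exact lenO_ge ha hβ hj

end Partition

section Rectangles

variable {d : ℕ} {a : Fin d → ℝ} {β : ℝ} {j : ℕ}

lemma rVol_nonneg (R : Fin d → Set ℝ) : 0 ≤ rVol R :=
  prod_nonneg fun _ _ => ENNReal.toReal_nonneg

lemma rVol_cube : rVol (fun _ : Fin d => Set.Ico (-1 : ℝ) 1) = 2 ^ d := by
  simp [rVol, Real.volume_Ico, one_add_one_eq_two]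

lemma rVol_ivl (ha : ∀ i, 1 ≤ a i) (hβ : 1 ≤ β) (hj : 1 ≤ j) (k : Fin d → ℤ) :
    rVol (fun i => ivl (a i) β j (k i)) = ∏ i, lenIdx (a i) β j (k i) :=
  prod_congr rfl fun i _ => volume_ivl (by nlinarith [ha i]) hj

lemma rVol_ge_of_mem_rectA (ha : ∀ i, 1 ≤ a i) (hβ : 1 ≤ β) (hj : 1 ≤ j)
    {R : Fin d → Set ℝ} (hR : R ∈ rectA a β j) :
    (2 : ℝ)⁻¹ ^ d * (j : ℝ) ^ ((∑ i, a i) * (β - 1)) ≤ rVol R := by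
  choose k _ _ hk using hR
  obtain rfl : R = fun i => ivl (a i) β j (k i) := funext hk
  calc (2 : ℝ)⁻¹ ^ d * (j : ℝ) ^ ((∑ i, a i) * (β - 1))
      = ∏ i, (j : ℝ) ^ (a i * β - a i) / 2 := by
        rw [sum_mul, Real.rpow_sum_of_pos (Nat.cast_pos.mpr hj), prod_div_distrib, prod_const,
          card_univ, Fintype.card_fin, inv_pow, div_eq_inv_mul]
        simp only [mul_sub, mul_one]
    _ ≤ ∏ i, lenIdx (a i) β j (k i) :=
        prod_le_prod (fun i _ => by positivity) fun i _ => lenIdx_ge (ha i) hβ hj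
    _ = rVol (fun i => ivl (a i) β j (k i)) := (rVol_ivl ha hβ hj k).symm

lemma sum_rVol_le_of_subset_rectK (ha : ∀ i, 1 ≤ a i) (hβ : 1 ≤ β) (hj : 1 ≤ j)
    (𝓡 : Finset (Fin d → Set ℝ)) (h𝓡 : ∀ R ∈ 𝓡, R ∈ rectK a β j) :
    ∑ R ∈ 𝓡, rVol R ≤
      2 ^ d * (((j : ℝ) + 1) ^ ((∑ i, a i) * β) - (j : ℝ) ^ ((∑ i, a i) * β)) := by
  classical
  set all := Fintype.piFinset fun i => Ico 0 (numIv (a i) j)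
  set inner := Fintype.piFinset fun i => Ico (mOut (a i) j) (mOut (a i) j + mIn (a i) j)
  have hinner : inner ⊆ all := Fintype.piFinset_subset _ _ fun i =>
    Ico_subset_Ico (mOut_pos hj).le (by unfold numIv; linarith [mOut_pos (a := a i) hj])
  have h𝓡sub : 𝓡 ⊆ (all \ inner).image fun k i => ivl (a i) β j (k i) := by
    intro R hR
    obtain ⟨hRA, hRB⟩ := h𝓡 R hR
    choose k hk₀ hkn hk using hRA
    refine mem_image.mpr
      ⟨k, mem_sdiff.mpr ⟨?_, fun hkB => hRB fun i => ?_⟩, funext fun i => (hk i).symm⟩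
    · exact Fintype.mem_piFinset.mpr fun i => mem_Ico.mpr ⟨hk₀ i, hkn i⟩
    · exact ⟨k i, mem_Ico.mp (Fintype.mem_piFinset.mp hkB i), hk i⟩
  calc ∑ R ∈ 𝓡, rVol R
      ≤ ∑ R ∈ (all \ inner).image fun k i => ivl (a i) β j (k i), rVol R :=
        sum_le_sum_of_subset_of_nonneg h𝓡sub fun R _ _ => rVol_nonneg R
    _ ≤ ∑ k ∈ all \ inner, rVol fun i => ivl (a i) β j (k i) :=
        sum_image_le_of_nonneg fun R _ => rVol_nonneg R
    _ = ∏ i, ∑ k ∈ Ico 0 (numIv (a i) j), lenIdx (a i) β j k -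
          ∏ i, ∑ k ∈ Ico (mOut (a i) j) (mOut (a i) j + mIn (a i) j), lenIdx (a i) β j k := by
        simp_rw [rVol_ivl ha hβ hj, sum_sdiff_eq_sub hinner, prod_univ_sum]
        rfl
    _ = _ := by
        simp_rw [sum_lenIdx_all hj, sum_lenIdx_inner hj, prod_mul_distrib, prod_const, card_univ,
          Fintype.card_fin, ← Real.rpow_sum_of_pos (Nat.cast_pos.mpr hj),
          ← Real.rpow_sum_of_pos (Nat.cast_add_one_pos j), sum_mul]
        ring

end Rectangles

section Packing

variable {d : ℕ} {a : Fin d → ℝ} {β γ q ε : ℝ}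

lemma one_le_sum_of_one_le (hd : 1 ≤ d) (ha : ∀ i, 1 ≤ a i) : 1 ≤ ∑ i, a i := by
  calc (1 : ℝ) ≤ (univ : Finset (Fin d)).card • (1 : ℝ) := by simpa using hd
    _ ≤ ∑ i, a i := card_nsmul_le_sum _ _ _ fun i _ => ha i

theorem exists_sum_rVol_rpow_le_of_subset_rectK (hd : 1 ≤ d) (ha : ∀ i, 1 ≤ a i) (hβ : 1 ≤ β)
    (hγ : 1 ≤ γ * (β - 1)) (hεq : ε ≤ q) (hεγ : ε ≤ γ + 1) :
    ∃ C, 0 ≤ C ∧ ∀ j, 1 ≤ j → ∀ 𝓡 : Finset (Fin d → Set ℝ), (∀ R ∈ 𝓡, R ∈ rectK a β j) →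
      ∀ S, 0 ≤ S → (∀ R ∈ 𝓡, rVol R ≤ S) →
        ∑ R ∈ 𝓡, rVol R ^ (q - γ) ≤
          C * S ^ (q - ε) * (j : ℝ) ^ ((∑ i, a i) * (β - 1) * ε - 1) := by
  have hν := one_le_sum_of_one_le hd ha
  set ν := ∑ i, a i
  have hνβ : 1 ≤ ν * β := one_le_mul_of_one_le_of_one_le hν hβ
  refine ⟨((2 : ℝ)⁻¹ ^ d) ^ (ε - γ - 1) * (2 ^ d * (ν * β * 2 ^ (ν * β - 1))), by positivity,
    fun j hj 𝓡 h𝓡 S hS h𝓡S => ?_⟩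
  have hj₁ : (1 : ℝ) ≤ j := Nat.one_le_cast.mpr hj
  set L := (2 : ℝ)⁻¹ ^ d * (j : ℝ) ^ (ν * (β - 1))
  have hL : 0 < L := by positivity
  have hterm : ∀ R ∈ 𝓡, rVol R ^ (q - γ) ≤ S ^ (q - ε) * L ^ (ε - γ - 1) * rVol R := by
    intro R hR
    have := rpow_add_add_one_le hL (rVol_ge_of_mem_rectA ha hβ hj (h𝓡 R hR).1) (h𝓡S R hR)
      (sub_nonneg.mpr hεq) (by linarith : ε - γ - 1 ≤ 0)
    rwa [show q - ε + (ε - γ - 1) + 1 = q - γ by ring] at this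
  have hvol : ∑ R ∈ 𝓡, rVol R ≤ 2 ^ d * (ν * β * 2 ^ (ν * β - 1) * (j : ℝ) ^ (ν * β - 1)) :=
    (sum_rVol_le_of_subset_rectK ha hβ hj 𝓡 h𝓡).trans
      (mul_le_mul_of_nonneg_left (add_one_rpow_sub_rpow_le hj₁ hνβ) (by positivity))
  have hexp : L ^ (ε - γ - 1) * (j : ℝ) ^ (ν * β - 1) ≤
      ((2 : ℝ)⁻¹ ^ d) ^ (ε - γ - 1) * (j : ℝ) ^ (ν * (β - 1) * ε - 1) := by
    rw [Real.mul_rpow (by positivity) (by positivity), ← Real.rpow_mul (by positivity), mul_assoc,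
      ← Real.rpow_add (by positivity)]
    gcongr
    -- the exponent drops from `κ (ε - γ - 1) + νβ - 1` to `κ ε - 1` because `κ γ ≥ ν`
    nlinarith [mul_le_mul_of_nonneg_left hγ (by linarith : (0 : ℝ) ≤ ν)]
  calc ∑ R ∈ 𝓡, rVol R ^ (q - γ)
      ≤ ∑ R ∈ 𝓡, S ^ (q - ε) * L ^ (ε - γ - 1) * rVol R := sum_le_sum hterm
    _ = S ^ (q - ε) * L ^ (ε - γ - 1) * ∑ R ∈ 𝓡, rVol R := (mul_sum _ _ _).symm
    _ ≤ S ^ (q - ε) * L ^ (ε - γ - 1) *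
          (2 ^ d * (ν * β * 2 ^ (ν * β - 1) * (j : ℝ) ^ (ν * β - 1))) := by gcongr
    _ = 2 ^ d * (ν * β * 2 ^ (ν * β - 1)) * S ^ (q - ε) *
          (L ^ (ε - γ - 1) * (j : ℝ) ^ (ν * β - 1)) := by ring
    _ ≤ 2 ^ d * (ν * β * 2 ^ (ν * β - 1)) * S ^ (q - ε) *
          (((2 : ℝ)⁻¹ ^ d) ^ (ε - γ - 1) * (j : ℝ) ^ (ν * (β - 1) * ε - 1)) := by gcongr
    _ = _ := by ring

lemma natCast_le_rpow_inv_of_mem_rectA (hd : 1 ≤ d) (ha : ∀ i, 1 ≤ a i) (hβ : 1 < β) {j : ℕ}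
    (hj : 1 ≤ j) {R : Fin d → Set ℝ} (hR : R ∈ rectA a β j) {S : ℝ} (hRS : rVol R ≤ S) :
    (j : ℝ) ≤ (2 ^ d * S) ^ ((∑ i, a i) * (β - 1))⁻¹ := by
  have hκ : 0 < (∑ i, a i) * (β - 1) :=
    mul_pos (by linarith [one_le_sum_of_one_le hd ha]) (by linarith)
  have hjκ := (rVol_ge_of_mem_rectA ha hβ.le hj hR).trans hRS
  rw [inv_pow, inv_mul_le_iff₀ (by positivity)] at hjκ
  calc (j : ℝ) = ((j : ℝ) ^ ((∑ i, a i) * (β - 1))) ^ ((∑ i, a i) * (β - 1))⁻¹ := by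
        rw [← Real.rpow_mul (Nat.cast_nonneg j), mul_inv_cancel₀ hκ.ne', Real.rpow_one]
    _ ≤ (2 ^ d * S) ^ ((∑ i, a i) * (β - 1))⁻¹ := by gcongr

open Classical in
lemma sum_filter_rectK0_rVol_rpow_le (𝓡 : Finset (Fin d → Set ℝ)) (hq : 0 ≤ q) {S : ℝ}
    (hS : 0 ≤ S) (h𝓡S : ∀ R ∈ 𝓡, rVol R ≤ S) :
    ∑ R ∈ 𝓡 with R ∈ rectK0 d, rVol R ^ (q - γ) ≤ ((2 : ℝ) ^ d) ^ (-γ) * S ^ q := by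
  classical
  rcases (𝓡.filter (· ∈ rectK0 d)).eq_empty_or_nonempty with h | ⟨R₀, hR₀⟩
  · rw [h, sum_empty]
    positivity
  obtain ⟨hR₀𝓡, hR₀K⟩ := mem_filter.mp hR₀
  have hsingle : 𝓡.filter (· ∈ rectK0 d) = {R₀} := eq_singleton_iff_unique_mem.mpr
    ⟨hR₀, fun R hR => ((mem_filter.mp hR).2).trans hR₀K.symm⟩
  rw [Set.mem_singleton_iff.mp hR₀K] at hsingle hR₀𝓡
  have h2S : (2 : ℝ) ^ d ≤ S := rVol_cube (d := d) ▸ h𝓡S _ hR₀𝓡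
  rw [hsingle, sum_singleton, rVol_cube, sub_eq_neg_add, Real.rpow_add (by positivity)]
  gcongr

open Classical in
theorem exists_sum_filter_not_rectK0_rVol_rpow_le (hd : 1 ≤ d) (ha : ∀ i, 1 ≤ a i)
    (hβ : 1 < β) (hγ : 1 ≤ γ * (β - 1)) (hε : 0 < ε) (hεq : ε ≤ q) (hεγ : ε ≤ γ + 1)
    (hκε : (∑ i, a i) * (β - 1) * ε ≤ 1) :
    ∃ C, 0 ≤ C ∧ ∀ 𝓡 : Finset (Fin d → Set ℝ), (∀ R ∈ 𝓡, R ∈ rectKall a β) →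
      ∀ S, 0 ≤ S → (∀ R ∈ 𝓡, rVol R ≤ S) →
        ∑ R ∈ 𝓡 with R ∉ rectK0 d, rVol R ^ (q - γ) ≤ C * S ^ q := by
  set κ := (∑ i, a i) * (β - 1)
  have hκ : 0 < κ := mul_pos (by linarith [one_le_sum_of_one_le hd ha]) (by linarith)
  obtain ⟨C₁, hC₁, hlevel⟩ := exists_sum_rVol_rpow_le_of_subset_rectK hd ha hβ.le hγ hεq hεγ
  refine ⟨C₁ * (κ * ε)⁻¹ * ((2 : ℝ) ^ d) ^ ε, by positivity, fun 𝓡 h𝓡 S hS h𝓡S => ?_⟩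
  set N := ⌊((2 : ℝ) ^ d * S) ^ κ⁻¹⌋₊
  have hcover : ∀ R ∈ 𝓡.filter (· ∉ rectK0 d), ∃ j ∈ Icc 1 N, R ∈ rectK a β j := by
    intro R hR
    obtain ⟨hR𝓡, hRK0⟩ := mem_filter.mp hR
    obtain ⟨j, hj, hRj⟩ : ∃ j, 1 ≤ j ∧ R ∈ rectK a β j := by
      simpa [rectKall, hRK0] using h𝓡 R hR𝓡
    exact ⟨j, mem_Icc.mpr ⟨hj, Nat.le_floor
      (natCast_le_rpow_inv_of_mem_rectA hd ha hβ hj hRj.1 (h𝓡S R hR𝓡))⟩, hRj⟩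
  calc ∑ R ∈ 𝓡 with R ∉ rectK0 d, rVol R ^ (q - γ)
      ≤ ∑ j ∈ Icc 1 N, ∑ R ∈ 𝓡.filter (· ∉ rectK0 d) with R ∈ rectK a β j,
          rVol R ^ (q - γ) :=
        sum_le_sum_sum_filter_of_cover (fun R _ => Real.rpow_nonneg (rVol_nonneg R) _) hcover
    _ ≤ ∑ j ∈ Icc 1 N, C₁ * S ^ (q - ε) * (j : ℝ) ^ (κ * ε - 1) :=
        sum_le_sum fun j hj => hlevel j (mem_Icc.mp hj).1 _ (fun R hR => (mem_filter.mp hR).2)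
          S hS fun R hR => h𝓡S R (mem_filter.mp (mem_filter.mp hR).1).1
    _ ≤ C₁ * S ^ (q - ε) * (((2 : ℝ) ^ d * S) ^ ε / (κ * ε)) := by
        rw [← mul_sum]
        gcongr
        exact sum_Icc_floor_rpow_le (by positivity) hκ hε hκε
    _ = C₁ * (κ * ε)⁻¹ * ((2 : ℝ) ^ d) ^ ε * (S ^ (q - ε) * S ^ ε) := by
        rw [Real.mul_rpow (by positivity) hS]
        ring
    _ = C₁ * (κ * ε)⁻¹ * ((2 : ℝ) ^ d) ^ ε * S ^ q := by
        rw [← Real.rpow_add_of_nonneg hS (sub_nonneg.mpr hεq) hε.le, sub_add_cancel]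

theorem exists_sum_rVol_rpow_le (hd : 1 ≤ d) (ha : ∀ i, 1 ≤ a i) (hβ : 1 < β)
    (hγ : 1 ≤ γ * (β - 1)) (hq : 0 < q) :
    ∃ C, 0 < C ∧ ∀ 𝓡 : Finset (Fin d → Set ℝ), (∀ R ∈ 𝓡, R ∈ rectKall a β) →
      ∀ S, 0 ≤ S → (∀ R ∈ 𝓡, rVol R ≤ S) → ∑ R ∈ 𝓡, rVol R ^ (q - γ) ≤ C * S ^ q := by
  classical
  have hν := one_le_sum_of_one_le hd ha
  set κ := (∑ i, a i) * (β - 1)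
  have hκ : 0 < κ := mul_pos (by linarith) (by linarith)
  have hε : 0 < min q κ⁻¹ := lt_min hq (inv_pos.mpr hκ)
  have hκε : κ * min q κ⁻¹ ≤ 1 :=
    (mul_le_mul_of_nonneg_left (min_le_right _ _) hκ.le).trans (mul_inv_cancel₀ hκ.ne').le
  -- `κ γ = ν γ (β - 1) ≥ ν ≥ 1`
  have hεγ : min q κ⁻¹ ≤ γ + 1 := by
    have : κ⁻¹ ≤ γ := (inv_le_iff_one_le_mul₀ hκ).mpr (by nlinarith)
    linarith [min_le_right q κ⁻¹]
  obtain ⟨C₁, hC₁, hlevels⟩ :=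
    exists_sum_filter_not_rectK0_rVol_rpow_le hd ha hβ hγ hε (min_le_left _ _) hεγ hκε
  refine ⟨((2 : ℝ) ^ d) ^ (-γ) + C₁, by positivity, fun 𝓡 h𝓡 S hS h𝓡S => ?_⟩
  rw [← sum_filter_add_sum_filter_not 𝓡 (· ∈ rectK0 d), add_mul]
  exact add_le_add (sum_filter_rectK0_rVol_rpow_le 𝓡 hq.le hS h𝓡S) (hlevels 𝓡 h𝓡 S hS h𝓡S)

end Packing

section AnisotropicNorm

variable {d : ℕ} {a : Fin d → ℝ} {nrm : (Fin d → ℝ) → ℝ}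

lemma abs_apply_lt_one_of_lt_one (ha : ∀ i, 0 < a i) (hnrm : IsAnisoNorm a nrm)
    {y : Fin d → ℝ} (hy : nrm y < 1) (i : Fin d) : |y i| < 1 := by
  rcases eq_or_ne y 0 with rfl | hy₀
  · simp
  obtain ⟨ht, hunit⟩ := hnrm.2 y hy₀
  have hdil : |aDilNeg a (nrm y) y i| ≤ 1 := by
    rw [← sq_le_one_iff_abs_le_one, ← Real.sqrt_eq_one.mp hunit]
    exact single_le_sum (f := fun i => aDilNeg a (nrm y) y i ^ 2) (fun i _ => sq_nonneg _)
      (mem_univ i)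
  have hyi : y i = nrm y ^ a i * aDilNeg a (nrm y) y i := by
    rw [aDilNeg, ← mul_assoc, ← Real.rpow_add ht, add_neg_cancel, Real.rpow_zero, one_mul]
  rw [hyi, abs_mul, abs_of_pos (Real.rpow_pos_of_pos ht _)]
  calc _ ≤ nrm y ^ a i * 1 := by gcongr
    _ < 1 := by rw [mul_one]; exact Real.rpow_lt_one ht.le hy (ha i)

/-- In the coordinates `δ_R y`, the cell `U(R, n)` lies in the cube of side `2` around
`π (n + 1/2)`, and these centres are `π > 2` apart. -/
lemma eq_of_mem_Uset (ha : ∀ i, 0 < a i) (hnrm : IsAnisoNorm a nrm) {R : Fin d → Set ℝ}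
    {n n' : Fin d → ℕ} {x : Fin d → ℝ} (hx : x ∈ Uset nrm R n) (hx' : x ∈ Uset nrm R n') :
    n = n' := by
  funext i
  have h := abs_lt.mp (abs_apply_lt_one_of_lt_one ha hnrm hx i)
  have h' := abs_lt.mp (abs_apply_lt_one_of_lt_one ha hnrm hx' i)
  have hπ := Real.pi_gt_three
  have h₁ : (n i : ℝ) < n' i + 1 := by nlinarith
  have h₂ : (n' i : ℝ) < n i + 1 := by nlinarith
  exact_mod_cast le_antisymm (Nat.lt_succ_iff.mp (by exact_mod_cast h₁))
    (Nat.lt_succ_iff.mp (by exact_mod_cast h₂))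

open Classical in
lemma sum_mul_indicator_Uset_eq (ha : ∀ i, 0 < a i) (hnrm : IsAnisoNorm a nrm)
    (Λ : Finset ((Fin d → Set ℝ) × (Fin d → ℕ))) (x : Fin d → ℝ) (f : (Fin d → Set ℝ) → ℝ) :
    ∑ p ∈ Λ, f p.1 * (Uset nrm p.1 p.2).indicator (fun _ => (1 : ℝ)) x =
      ∑ R ∈ (Λ.filter fun p => x ∈ Uset nrm p.1 p.2).image Prod.fst, f R := by
  have hinj : Set.InjOn Prod.fst (↑(Λ.filter fun p => x ∈ Uset nrm p.1 p.2) :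
      Set ((Fin d → Set ℝ) × (Fin d → ℕ))) := by
    intro p hp p' hp' h
    have hx' := (mem_filter.mp hp').2
    rw [← h] at hx'
    exact Prod.ext h (eq_of_mem_Uset ha hnrm (mem_filter.mp hp).2 hx')
  rw [sum_image hinj, sum_filter]
  exact sum_congr rfl fun p _ => by simp [Set.indicator_apply]

end AnisotropicNorm

/-- Lemma 5.2: with `β = 1/(1−α)`, for every finite
`Λ ⊂ 𝒦 × ℕ₀^d` and every `x`:
`∑_{(R,n)∈Λ} |R|^{q − ν(1−α)/α} 𝟙_{U(R,n)}(x) ≤ C · I_Λ(x)^q`, where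
`I_Λ(x) = max{|R| 𝟙_{U(R,n)}(x) : (R,n) ∈ Λ}` (max over the empty set being `0`). -/
theorem stmt15 (d : ℕ) (hd : 1 ≤ d) (a : Fin d → ℝ) (ha : ∀ i, 1 ≤ a i)
    (nrm : (Fin d → ℝ) → ℝ) (hnrm : IsAnisoNorm a nrm)
    (α : ℝ) (hα0 : 0 < α) (hα1 : α < 1) (q : ℝ) (hq : 0 < q) :
    ∃ C : ℝ, 0 < C ∧
      ∀ Λ : Finset ((Fin d → Set ℝ) × (Fin d → ℕ)),
        (∀ p ∈ Λ, p.1 ∈ rectKall a (1 / (1 - α))) →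
        ∀ x : Fin d → ℝ,
          (∑ p ∈ Λ, rVol p.1 ^ (q - (∑ i, a i) * (1 - α) / α) *
              (Uset nrm p.1 p.2).indicator (fun _ => (1 : ℝ)) x) ≤
          C * (⨆ p ∈ Λ,
              rVol p.1 * (Uset nrm p.1 p.2).indicator (fun _ => (1 : ℝ)) x) ^ q := by
  classical
  have hβ : 1 < 1 / (1 - α) := by rw [lt_div_iff₀ (by linarith)]; linarith
  have hγ : 1 ≤ (∑ i, a i) * (1 - α) / α * (1 / (1 - α) - 1) := by
    have h1α : 1 - α ≠ 0 := by linarith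
    rw [show (∑ i, a i) * (1 - α) / α * (1 / (1 - α) - 1) = ∑ i, a i by field_simp; ring]
    exact one_le_sum_of_one_le hd ha
  obtain ⟨C, hC, hpack⟩ := exists_sum_rVol_rpow_le hd ha hβ hγ hq
  refine ⟨C, hC, fun Λ hΛ x => ?_⟩
  refine (sum_mul_indicator_Uset_eq (fun i => one_pos.trans_le (ha i)) hnrm Λ x
    fun R => rVol R ^ (q - (∑ i, a i) * (1 - α) / α)).trans_le
    (hpack _ (fun R hR => ?_) _ (Real.iSup_nonneg fun p => Real.iSup_nonneg fun _ => ?_)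
      fun R hR => ?_)
  · obtain ⟨p, hp, rfl⟩ := mem_image.mp hR
    exact hΛ p (mem_filter.mp hp).1
  · exact mul_nonneg (rVol_nonneg _) (Set.indicator_nonneg (fun _ _ => zero_le_one) _)
  · obtain ⟨p, hp, rfl⟩ := mem_image.mp hR
    obtain ⟨hpΛ, hxp⟩ := mem_filter.mp hp
    calc rVol p.1 = rVol p.1 * (Uset nrm p.1 p.2).indicator (fun _ => (1 : ℝ)) x := by
          simp [hxp]
      _ ≤ _ := Finset.le_ciSup₂_of_mem
          (fun p => rVol p.1 * (Uset nrm p.1 p.2).indicator (fun _ => (1 : ℝ)) x) hpΛ
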